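/- Let G be a tree on X and D a domain of strict linear orders each of which is single-peaked on G. Then every extreme rule f^ℓ on G is strategy-proof on D: for every agent i, profile (P_i,P_{-i}) ∈ D^n, and misreport P'_i ∈ D, either f^ℓ(P'_i,P_{-i}) = f^ℓ(P_i,P_{-i}) or f^ℓ(P_i,P_{-i}) P_i f^ℓ(P'_i,P_{-i}). -/

import Mathlib

open SimpleGraph

/-- `z` lies on a path from `x` to `y` in `G` (in a tree, the unique path). -/
def pathSet {X : Type*} (G : SimpleGraph X) (x y z : X) : Prop :=
  ∃ p : G.Walk x y, p.IsPath ∧ z ∈ p.support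

/-- The path hull `H(S)`: union of paths between pairs of nodes of `S`. -/
def hull {X : Type*} (G : SimpleGraph X) (S : Set X) (z : X) : Prop :=
  ∃ x ∈ S, ∃ y ∈ S, pathSet G x y z

/-- `m` is a distance minimizer of `x` on the path hull of `S`. -/
def isMinimizer {X : Type*} (G : SimpleGraph X) (x : X) (S : Set X) (m : X) : Prop :=
  hull G S m ∧ ∀ y, hull G S y → G.dist x m ≤ G.dist x y

/-- `ℓ` is a leaf: it has exactly one neighbor. -/
def isLeaf {X : Type*} (G : SimpleGraph X) (ℓ : X) : Prop := ∃! x, G.Adj ℓ x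

/-- `t` is the top-ranked alternative of the strict preference `P`. -/
def isTop {X : Type*} (P : X → X → Prop) (t : X) : Prop := ∀ y, y ≠ t → P t y

/-- `P` with peak `t` is single-peaked on the tree `G`. -/
def singlePeakedAt {X : Type*} (G : SimpleGraph X) (P : X → X → Prop) (t : X) : Prop :=
  ∀ a b, a ≠ b → pathSet G t a b → P b a

section Aux

variable {X : Type*} {G : SimpleGraph X}

lemma exists_path' (hG : G.IsTree) (x y : X) : ∃ p : G.Walk x y, p.IsPath := by
  classical
  obtain ⟨w⟩ := hG.isConnected.preconnected x y
  exact ⟨w.bypass, w.bypass_isPath⟩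

lemma path_length' (hG : G.IsTree) {x y : X} {p : G.Walk x y} (hp : p.IsPath) :
    p.length = G.dist x y := by
  classical
  refine le_antisymm ?_ (SimpleGraph.dist_le p)
  obtain ⟨w, hw⟩ := (hG.isConnected.preconnected x y).exists_walk_length_eq_dist
  have h1 : (⟨p, hp⟩ : G.Path x y) = ⟨w.bypass, w.bypass_isPath⟩ :=
    hG.IsAcyclic.path_unique _ _
  have h2 : p = w.bypass := congrArg Subtype.val h1
  rw [h2]
  calc w.bypass.length ≤ w.length := w.length_bypass_le
    _ = G.dist x y := hw

lemma isPath_append' {x y z : X} {p : G.Walk x y} {q : G.Walk y z}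
    (hp : p.IsPath) (hq : q.IsPath)
    (h : ∀ v, v ∈ p.support → v ∈ q.support → v = y) : (p.append q).IsPath := by
  rw [Walk.isPath_def, Walk.support_append, List.nodup_append]
  have hqc : q.support = y :: q.support.tail := q.support_eq_cons
  have hq' : (y :: q.support.tail).Nodup := by rw [← hqc]; exact hq.support_nodup
  refine ⟨hp.support_nodup, (List.nodup_cons.mp hq').2, ?_⟩
  intro v hv1 w hv2 hvw
  rw [← hvw] at hv2
  have hv2' : v ∈ q.support := by rw [hqc]; exact List.mem_cons_of_mem _ hv2
  have hvy : v = y := h v hv1 hv2'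
  exact (List.nodup_cons.mp hq').1 (hvy ▸ hv2)

lemma pathSet_dist (hG : G.IsTree) {x y z : X} (h : pathSet G x y z) :
    G.dist x z + G.dist z y = G.dist x y := by
  classical
  obtain ⟨p, hp, hz⟩ := h
  have h1 : (p.takeUntil z hz).length = G.dist x z := path_length' hG (hp.takeUntil hz)
  have h2 : (p.dropUntil z hz).length = G.dist z y := path_length' hG (hp.dropUntil hz)
  have h3 := congrArg Walk.length (p.take_spec hz)
  rw [Walk.length_append, h1, h2, path_length' hG hp] at h3
  exact h3

lemma dist_pathSet (hG : G.IsTree) {x y z : X}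
    (h : G.dist x z + G.dist z y = G.dist x y) : pathSet G x y z := by
  classical
  obtain ⟨p1, hp1⟩ := exists_path' hG x z
  obtain ⟨p2, hp2⟩ := exists_path' hG z y
  have hkey : ∀ v, v ∈ p1.support → v ∈ p2.support → v = z := by
    intro v h1 h2
    have e1 := pathSet_dist hG ⟨p1, hp1, h1⟩
    have e2 := pathSet_dist hG ⟨p2, hp2, h2⟩
    have t1 := hG.isConnected.dist_triangle (u := x) (v := v) (w := y)
    have c1 : G.dist v z = G.dist z v := SimpleGraph.dist_comm
    have h0 : G.dist z v = 0 := by omega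
    exact ((hG.isConnected.dist_eq_zero_iff).mp h0).symm
  exact ⟨p1.append p2, isPath_append' hp1 hp2 hkey,
    by rw [Walk.mem_support_append_iff]; exact Or.inl p1.end_mem_support⟩

lemma pathSet_symm {x y z : X} (h : pathSet G x y z) : pathSet G y x z := by
  obtain ⟨p, hp, hz⟩ := h
  exact ⟨p.reverse, hp.reverse, by rw [Walk.support_reverse, List.mem_reverse]; exact hz⟩

lemma pathSet_trans (hG : G.IsTree) {x y u w : X}
    (h1 : pathSet G x y u) (h2 : pathSet G u y w) : pathSet G x y w := by
  classical
  obtain ⟨p, hp, hu⟩ := h1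
  obtain ⟨q, hq, hw⟩ := h2
  have heq : (⟨q, hq⟩ : G.Path u y) = ⟨p.dropUntil u hu, hp.dropUntil hu⟩ :=
    hG.IsAcyclic.path_unique _ _
  have hq' : q = p.dropUntil u hu := congrArg Subtype.val heq
  rw [hq'] at hw
  exact ⟨p, hp, Walk.support_dropUntil_subset p hu hw⟩

lemma pathSet_split (hG : G.IsTree) {u v w : X} (h : pathSet G u v w) (x : X) :
    pathSet G u x w ∨ pathSet G x v w := by
  classical
  obtain ⟨r, hr, hw⟩ := h
  obtain ⟨s1, hs1⟩ := exists_path' hG u x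
  obtain ⟨s2, hs2⟩ := exists_path' hG x v
  have heq : (⟨r, hr⟩ : G.Path u v) = ⟨(s1.append s2).bypass, Walk.bypass_isPath _⟩ :=
    hG.IsAcyclic.path_unique _ _
  have hr' : r = (s1.append s2).bypass := congrArg Subtype.val heq
  rw [hr'] at hw
  have hw2 : w ∈ (s1.append s2).support := Walk.support_bypass_subset _ hw
  rw [Walk.mem_support_append_iff] at hw2
  exact hw2.imp (fun h => ⟨s1, hs1, h⟩) (fun h => ⟨s2, hs2, h⟩)

lemma hull_convex (hG : G.IsTree) {S : Set X} {u v w : X}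
    (hu : hull G S u) (hv : hull G S v) (hw : pathSet G u v w) : hull G S w := by
  obtain ⟨x1, hx1, y1, hy1, hu⟩ := hu
  obtain ⟨x2, hx2, y2, hy2, hv⟩ := hv
  rcases pathSet_split hG hw x1 with h | h
  · exact ⟨y1, hy1, x1, hx1, pathSet_trans hG (pathSet_symm hu) h⟩
  · rcases pathSet_split hG h x2 with h2 | h2
    · exact ⟨x1, hx1, x2, hx2, h2⟩
    · exact ⟨x2, hx2, y2, hy2,
        pathSet_symm (pathSet_trans hG (pathSet_symm hv) (pathSet_symm h2))⟩

lemma median' [Fintype X] (hG : G.IsTree) (x y z : X) :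
    ∃ m, pathSet G x y m ∧ pathSet G x z m ∧ pathSet G y z m := by
  classical
  set F : Finset X := Finset.univ.filter (fun v => pathSet G x y v ∧ pathSet G x z v) with hF
  have hxF : x ∈ F := by
    simp only [hF, Finset.mem_filter, Finset.mem_univ, true_and]
    obtain ⟨p, hp⟩ := exists_path' hG x y
    obtain ⟨q, hq⟩ := exists_path' hG x z
    exact ⟨⟨p, hp, p.start_mem_support⟩, ⟨q, hq, q.start_mem_support⟩⟩
  obtain ⟨m, hmF, hmax⟩ := F.exists_max_image (fun v => G.dist x v) ⟨x, hxF⟩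
  simp only [hF, Finset.mem_filter, Finset.mem_univ, true_and] at hmF
  obtain ⟨⟨p, hp, hmp⟩, ⟨q, hq, hmq⟩⟩ := hmF
  refine ⟨m, ⟨p, hp, hmp⟩, ⟨q, hq, hmq⟩, ?_⟩
  set p2 := p.dropUntil m hmp with hp2def
  set q2 := q.dropUntil m hmq with hq2def
  have hp2 : p2.IsPath := hp.dropUntil hmp
  have hq2 : q2.IsPath := hq.dropUntil hmq
  have hdisj : ∀ v, v ∈ p2.reverse.support → v ∈ q2.support → v = m := by
    intro v hv1 hv2
    rw [Walk.support_reverse, List.mem_reverse] at hv1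
    have hvp : v ∈ p.support := Walk.support_dropUntil_subset p hmp hv1
    have hvq : v ∈ q.support := Walk.support_dropUntil_subset q hmq hv2
    have hvF : v ∈ F := by
      simp only [hF, Finset.mem_filter, Finset.mem_univ, true_and]
      exact ⟨⟨p, hp, hvp⟩, ⟨q, hq, hvq⟩⟩
    have hle : G.dist x v ≤ G.dist x m := hmax v hvF
    have e1 := pathSet_dist hG ⟨p2, hp2, hv1⟩
    have e2 := pathSet_dist hG ⟨p, hp, hvp⟩
    have e3 := pathSet_dist hG ⟨p, hp, hmp⟩
    have h0 : G.dist m v = 0 := by omega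
    exact ((hG.isConnected.dist_eq_zero_iff).mp h0).symm
  have hw : (p2.reverse.append q2).IsPath := isPath_append' hp2.reverse hq2 hdisj
  refine ⟨p2.reverse.append q2, hw, ?_⟩
  rw [Walk.mem_support_append_iff]
  exact Or.inl (by rw [Walk.support_reverse, List.mem_reverse]; exact p2.start_mem_support)

lemma gate' [Fintype X] (hG : G.IsTree) {S : Set X} {ℓ c : X}
    (hc : isMinimizer G ℓ S c) :
    ∀ x, hull G S x → G.dist ℓ c + G.dist c x = G.dist ℓ x := by
  intro x hx
  obtain ⟨w, h1, h2, h3⟩ := median' hG ℓ c x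
  have hwhull : hull G S w := hull_convex hG hc.1 hx h3
  have hmin := hc.2 w hwhull
  have e1 := pathSet_dist hG h1
  have h0 : G.dist w c = 0 := by omega
  have hwc : w = c := (hG.isConnected.dist_eq_zero_iff).mp h0
  have e2 := pathSet_dist hG h2
  rw [hwc] at e2
  exact e2

lemma two_on_segment (hG : G.IsTree) {ℓ b u v : X}
    (h1 : pathSet G ℓ b u) (h2 : pathSet G ℓ b v) :
    (G.dist ℓ u + G.dist u v = G.dist ℓ v) ∨ (G.dist ℓ v + G.dist v u = G.dist ℓ u) := by
  classical
  obtain ⟨p, hp, hu⟩ := h1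
  obtain ⟨q, hq, hv⟩ := h2
  have heq : (⟨q, hq⟩ : G.Path ℓ b) = ⟨p, hp⟩ := hG.IsAcyclic.path_unique _ _
  have hq' : q = p := congrArg Subtype.val heq
  rw [hq'] at hv
  have hsplit : v ∈ (p.takeUntil u hu).support ∨ v ∈ (p.dropUntil u hu).support := by
    rw [← Walk.mem_support_append_iff, p.take_spec hu]; exact hv
  rcases hsplit with h | h
  · right; exact pathSet_dist hG ⟨p.takeUntil u hu, hp.takeUntil hu, h⟩
  · left
    have e1 := pathSet_dist hG ⟨p.dropUntil u hu, hp.dropUntil hu, h⟩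
    have e2 := pathSet_dist hG ⟨p, hp, hu⟩
    have e3 := pathSet_dist hG ⟨p, hp, hv⟩
    omega

lemma key_from (hG : G.IsTree) {ℓ a c c' : X}
    (h1 : G.dist ℓ c' + G.dist c' c = G.dist ℓ c)
    (h2 : G.dist ℓ c + G.dist c a = G.dist ℓ a) :
    G.dist a c + G.dist c c' = G.dist a c' := by
  have t1 := hG.isConnected.dist_triangle (u := c') (v := c) (w := a)
  have t2 := hG.isConnected.dist_triangle (u := ℓ) (v := c') (w := a)
  have c1 : G.dist c' c = G.dist c c' := SimpleGraph.dist_comm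
  have c2 : G.dist c' a = G.dist a c' := SimpleGraph.dist_comm
  have c3 : G.dist c a = G.dist a c := SimpleGraph.dist_comm
  omega

end Aux

theorem extreme_rules_strategyproof_of_sp {X : Type*} [Fintype X]
    (hX : 3 ≤ Fintype.card X)
    (G : SimpleGraph X) (hG : G.IsTree)
    (n : ℕ)
    (D : Set (X → X → Prop))
    (hD : ∀ P ∈ D, IsStrictTotalOrder X P)
    (hsp : ∀ P ∈ D, ∀ t : X, isTop P t → singlePeakedAt G P t)
    (ℓ : X) (hℓ : isLeaf G ℓ)
    (P : Fin n → (X → X → Prop)) (hP : ∀ i, P i ∈ D)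
    (t : Fin n → X) (ht : ∀ i, isTop (P i) (t i))
    (i : Fin n) (Q : X → X → Prop) (hQ : Q ∈ D)
    (t' : X) (ht' : isTop Q t')
    (c c' : X)
    (hc : isMinimizer G ℓ (Set.range t) c)
    (hc' : isMinimizer G ℓ (Set.range (Function.update t i t')) c') :
    c' = c ∨ P i c c' := by
  classical
  have conn := hG.isConnected
  have gate_c := gate' hG hc
  have gate_c' := gate' hG hc'
  have self_hull : ∀ (S : Set X) (z : X), z ∈ S → hull G S z := by
    intro S z hz
    exact ⟨z, hz, z, hz, Walk.nil, Walk.IsPath.nil, by simp⟩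
  have haT : hull G (Set.range t) (t i) := self_hull _ _ ⟨i, rfl⟩
  by_cases hcc : c' = c
  · exact Or.inl hcc
  right
  have g2 : G.dist ℓ c + G.dist c (t i) = G.dist ℓ (t i) := gate_c (t i) haT
  have key : G.dist (t i) c + G.dist c c' = G.dist (t i) c' := by
    by_cases hca : c = t i
    · rw [hca, SimpleGraph.dist_self]
      simp
    · obtain ⟨x, hxT, y, hyT, hxy⟩ := hc.1
      have exy := pathSet_dist hG hxy
      have hxcase : x ∈ Set.range (Function.update t i t') ∨ x = t i := by
        obtain ⟨j, rfl⟩ := hxT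
        by_cases hj : j = i
        · right; rw [hj]
        · left; exact ⟨j, Function.update_of_ne hj _ _⟩
      have hycase : y ∈ Set.range (Function.update t i t') ∨ y = t i := by
        obtain ⟨j, rfl⟩ := hyT
        by_cases hj : j = i
        · right; rw [hj]
        · left; exact ⟨j, Function.update_of_ne hj _ _⟩
      have finish : ∀ b, b ∈ Set.range t → b ∈ Set.range (Function.update t i t') →
          G.dist b c + G.dist c (t i) = G.dist b (t i) →
          G.dist (t i) c + G.dist c c' = G.dist (t i) c' := by
        intro b hbT hbT' eb
        have g3 := gate_c b (self_hull _ _ hbT)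
        have g4 := gate_c' b (self_hull _ _ hbT')
        rcases two_on_segment hG (dist_pathSet hG g3) (dist_pathSet hG g4) with hL | hR
        · have e5 : G.dist c c' + G.dist c' b = G.dist c b := by omega
          have t1 := conn.dist_triangle (u := t i) (v := c) (w := c')
          have t2 := conn.dist_triangle (u := b) (v := c') (w := t i)
          have c1 : G.dist b c = G.dist c b := SimpleGraph.dist_comm
          have c2 : G.dist c' (t i) = G.dist (t i) c' := SimpleGraph.dist_comm
          have c3 : G.dist c (t i) = G.dist (t i) c := SimpleGraph.dist_comm
          have c4 : G.dist b c' = G.dist c' b := SimpleGraph.dist_comm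
          omega
        · exact key_from hG hR g2
      rcases hxcase with hx' | hxa
      · rcases hycase with hy' | hya
        · have hcH' : hull G (Set.range (Function.update t i t')) c := ⟨x, hx', y, hy', hxy⟩
          exact key_from hG (gate_c' c hcH') g2
        · exact finish x hxT hx' (hya ▸ exy)
      · rcases hycase with hy' | hya
        · have eb : G.dist y c + G.dist c (t i) = G.dist y (t i) := by
            rw [hxa] at exy
            have c1 : G.dist c y = G.dist y c := SimpleGraph.dist_comm
            have c2 : G.dist (t i) c = G.dist c (t i) := SimpleGraph.dist_comm
            have c3 : G.dist (t i) y = G.dist y (t i) := SimpleGraph.dist_comm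
            omega
          exact finish y hyT hy' eb
        · exfalso
          apply hca
          rw [hxa, hya, SimpleGraph.dist_self] at exy
          have c1 : G.dist c (t i) = G.dist (t i) c := SimpleGraph.dist_comm
          have h0 : G.dist (t i) c = 0 := by omega
          exact (conn.dist_eq_zero_iff.mp h0).symm
  have hps : pathSet G (t i) c' c := dist_pathSet hG key
  exact hsp (P i) (hP i) (t i) (ht i) c' c hcc hps
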